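/- Let k be an algebraically closed field of characteristic p > 0 and let α = (α_n) be an admissible digit sequence. Let (a_n)_{n≥0} be a sequence of Laurent polynomials a_n ∈ k[t,t⁻¹] with supp(a_n) ⊆ p^nℤ \ (α_n p^n + p^{n+1}ℤ) for all n. Then the following are equivalent: (i) there exist Laurent polynomials y_n ∈ k[t,t⁻¹] with supp(y_n) ⊆ p^nℤ such that a_n = y_n − t^{α_n p^n}·y_{n+1} for all n; (ii) there exist y_n ∈ k((t)) with supp(y_n) ⊆ p^nℤ such that a_n = y_n − t^{α_n p^n}·y_{n+1} for all n, AND there exist z_n ∈ k((s)) with supp_s(z_n) ⊆ p^nℤ such that s^{α_n p^n}·ι(a_n) = s^{α_n p^n}·z_n − z_{n+1} for all n; (iii) there exists N such that a_n = 0 for all n ≥ N. -/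

import Mathlib

/-!
Put `eₙ = αₙ pⁿ` and `D m n = ∑_{m ≤ l < n} e_l`. Comparing coefficients in
`aₙ = yₙ - t^{eₙ} yₙ₊₁`: for `i ∈ supp aₙ` the support conditions force `yₙ₊₁` to vanish at
`i - eₙ` and `a_m` (for `m < n`) to vanish at `i + D m n`, so the coefficient `aₙ[i]` is carried
unchanged down to `y₀[i + D 0 n]`. For different `n` these positions are distinct (they differ
modulo `p^{m+1}`), so every `n` with `aₙ ≠ 0` produces its own nonzero coefficient of `y₀`. A
Laurent polynomial `y₀` has finitely many of them, and so does a pair `y₀ ∈ k((t))`,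
`z₀ ∈ k((t⁻¹))`, whose orders bound the positions from both sides. Conversely, if `aₙ = 0` for
`n ≥ N`, then `yₙ = ∑_{n ≤ m < N} t^{D n m} a_m` solves the recursion.
-/

/-- The element `t` of `k((t))`; the same element serves as `s` when the Laurent series
field models `k((t⁻¹)) = k((s))`, `t = s⁻¹`. -/
noncomputable def tt (k : Type*) [Field k] : LaurentSeries k := HahnSeries.single 1 1

/-- A digit sequence `α` (with `0 ≤ α n < p`) is admissible if either all digits vanish,
or the `p`-adic integer `∑ αₙ pⁿ` is not a rational integer (i.e. `(α n)` is neither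
eventually `0` nor eventually `p − 1`). -/
def AdmissibleDigits (p : ℕ) (α : ℕ → ℕ) : Prop :=
  (∀ n, α n = 0) ∨
    ¬ ((∃ N, ∀ n, N ≤ n → α n = 0) ∨ (∃ N, ∀ n, N ≤ n → α n = p - 1))

open Finset

section SolveDown

variable {R : Type*} [CommRing R]

def solveDown (c a : ℕ → R) (N n : ℕ) : R :=
  ∑ m ∈ Ico n N, (∏ l ∈ Ico n m, c l) * a m

theorem eq_solveDown_sub_mul (c a : ℕ → R) {N : ℕ} (hN : ∀ n, N ≤ n → a n = 0) (n : ℕ) :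
    a n = solveDown c a N n - c n * solveDown c a N (n + 1) := by
  rcases lt_or_ge n N with hn | hn
  · rw [solveDown, sum_eq_sum_Ico_succ_bot hn, solveDown, mul_sum, Ico_self, prod_empty,
      one_mul, add_sub_assoc, left_eq_add, sub_eq_zero]
    refine sum_congr rfl fun m hm => ?_
    rw [prod_eq_prod_Ico_succ_bot (mem_Ico.mp hm).1, mul_assoc]
  · simp [solveDown, Ico_eq_empty_of_le hn, Ico_eq_empty_of_le (hn.trans n.le_succ), hN n hn]

end SolveDown

section DigitChase

variable (p : ℕ) (α : ℕ → ℕ)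

def digitSum (m n : ℕ) : ℤ := ∑ l ∈ Ico m n, ((α l * p ^ l : ℕ) : ℤ)

@[simp] theorem digitSum_self (n : ℕ) : digitSum p α n n = 0 := by
  simp [digitSum]

theorem digitSum_eq_add {m n : ℕ} (h : m < n) :
    digitSum p α m n = ((α m * p ^ m : ℕ) : ℤ) + digitSum p α (m + 1) n :=
  sum_eq_sum_Ico_succ_bot h _

theorem digitSum_add_digitSum {l m n : ℕ} (hlm : l ≤ m) (hmn : m ≤ n) :
    digitSum p α l m + digitSum p α m n = digitSum p α l n :=
  sum_Ico_consecutive _ hlm hmn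

theorem pow_dvd_digitSum {r m : ℕ} (h : r ≤ m) (n : ℕ) : (p : ℤ) ^ r ∣ digitSum p α m n :=
  dvd_sum fun l hl => by
    push_cast
    exact dvd_mul_of_dvd_right (pow_dvd_pow _ (h.trans (mem_Ico.mp hl).1)) _

variable {R : Type*} [AddGroup R] {A Y : ℕ → ℤ → R}

theorem apply_add_digitSum_eq
    (hA : ∀ n i, A n i ≠ 0 → (p : ℤ) ^ n ∣ i ∧ ¬ (p : ℤ) ^ (n + 1) ∣ i - (α n * p ^ n : ℕ))
    (hY : ∀ n i, Y n i ≠ 0 → (p : ℤ) ^ n ∣ i)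
    (hrel : ∀ n v, A n v = Y n v - Y (n + 1) (v - (α n * p ^ n : ℕ)))
    {n : ℕ} {i : ℤ} (hi : A n i ≠ 0) {m : ℕ} (hm : m ≤ n) :
    Y m (i + digitSum p α m n) = A n i := by
  induction hm using Nat.decreasingInduction with
  | self =>
    have hnext : Y (n + 1) (i - (α n * p ^ n : ℕ)) = 0 := by
      by_contra h
      exact (hA n i hi).2 (hY _ _ h)
    rw [hrel n i, hnext, sub_zero, digitSum_self, add_zero]
  | of_succ m hmn ih =>
    have hshift : i + digitSum p α m n - (α m * p ^ m : ℕ) = i + digitSum p α (m + 1) n := by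
      rw [digitSum_eq_add p α hmn]; ring
    have hA0 : A m (i + digitSum p α m n) = 0 := by
      by_contra h
      apply (hA m _ h).2
      rw [hshift]
      exact dvd_add ((pow_dvd_pow _ hmn).trans (hA n i hi).1) (pow_dvd_digitSum p α le_rfl n)
    have := hrel m (i + digitSum p α m n)
    rw [hA0, hshift, ih, eq_comm, sub_eq_zero] at this
    exact this

theorem add_digitSum_ne
    (hA : ∀ n i, A n i ≠ 0 → (p : ℤ) ^ n ∣ i ∧ ¬ (p : ℤ) ^ (n + 1) ∣ i - (α n * p ^ n : ℕ))
    {m n : ℕ} (hmn : m < n) {i j : ℤ} (hi : A m i ≠ 0) (hj : A n j ≠ 0) :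
    i + digitSum p α 0 m ≠ j + digitSum p α 0 n := by
  intro h
  apply (hA m i hi).2
  have : i - (α m * p ^ m : ℕ) = j + digitSum p α (m + 1) n := by
    rw [← digitSum_add_digitSum p α (Nat.zero_le m) hmn.le, digitSum_eq_add p α hmn] at h
    linarith
  rw [this]
  exact dvd_add ((pow_dvd_pow _ hmn).trans (hA n j hj).1) (pow_dvd_digitSum p α le_rfl n)

theorem exists_forall_ge_eq_zero_of_finite
    (hA : ∀ n i, A n i ≠ 0 → (p : ℤ) ^ n ∣ i ∧ ¬ (p : ℤ) ^ (n + 1) ∣ i - (α n * p ^ n : ℕ))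
    {F : Set ℤ} (hF : F.Finite) (hmem : ∀ n i, A n i ≠ 0 → i + digitSum p α 0 n ∈ F) :
    ∃ N, ∀ n, N ≤ n → ∀ i, A n i = 0 := by
  set P : Set (ℕ × ℤ) := {x | A x.1 x.2 ≠ 0}
  have hinj : P.InjOn fun x => x.2 + digitSum p α 0 x.1 := by
    rintro ⟨m, i⟩ hi ⟨n, j⟩ hj (h : i + _ = j + _)
    rcases lt_trichotomy m n with hmn | rfl | hmn
    · exact absurd h (add_digitSum_ne p α hA hmn hi hj)
    · rw [add_left_inj] at h
      rw [h]
    · exact absurd h.symm (add_digitSum_ne p α hA hmn hj hi)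
  have hP : P.Finite :=
    .of_finite_image (hF.subset (Set.image_subset_iff.mpr fun x hx => hmem _ _ hx)) hinj
  obtain ⟨N, hN⟩ := (hP.image Prod.fst).bddAbove
  refine ⟨N + 1, fun n hn i => by_contra fun h => ?_⟩
  have := hN ⟨(n, i), h, rfl⟩
  omega

end DigitChase

namespace LaurentSeries

open HahnSeries

variable {R : Type*} [Ring R]

def supportDvdSubring (R : Type*) [Ring R] (d : ℤ) : Subring (LaurentSeries R) where
  carrier := {x | ∀ i ∈ x.support, d ∣ i}
  zero_mem' := by simp
  one_mem' i hi := by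
    rw [← single_zero_one] at hi
    rw [support_single_subset hi]
    exact dvd_zero d
  add_mem' {x y} hx hy i hi := (support_add_subset x y hi).elim (hx i) (hy i)
  neg_mem' {x} hx i hi := hx i (support_neg_subset x hi)
  mul_mem' hx hy i hi := by
    obtain ⟨u, hu, v, hv, rfl⟩ := support_mul_subset hi
    exact dvd_add (hx u hu) (hy v hv)

theorem mem_supportDvdSubring {d : ℤ} {x : LaurentSeries R} :
    x ∈ supportDvdSubring R d ↔ ∀ i ∈ x.support, d ∣ i :=
  Iff.rfl

def finiteSupportSubring (R : Type*) [Ring R] : Subring (LaurentSeries R) where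
  carrier := {x | x.support.Finite}
  zero_mem' := by simp
  one_mem' :=
    (Set.finite_singleton 0).subset (by rw [← single_zero_one]; exact support_single_subset)
  add_mem' {x y} hx hy := (hx.union hy).subset (support_add_subset x y)
  neg_mem' {x} hx := hx.subset (support_neg_subset x)
  mul_mem' hx hy := (hx.add hy).subset support_mul_subset

theorem mem_finiteSupportSubring {x : LaurentSeries R} :
    x ∈ finiteSupportSubring R ↔ x.support.Finite :=
  Iff.rfl

theorem single_one_mem_supportDvdSubring {d j : ℤ} (h : d ∣ j) :
    single j (1 : R) ∈ supportDvdSubring R d := fun _ hi => support_single_subset hi ▸ h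

theorem single_mem_finiteSupportSubring (j : ℤ) (r : R) :
    single j r ∈ finiteSupportSubring R :=
  (Set.finite_singleton j).subset support_single_subset

theorem supportDvdSubring_mono {d e : ℤ} (h : d ∣ e) :
    supportDvdSubring R e ≤ supportDvdSubring R d :=
  fun _ hx i hi => h.trans (hx i hi)

end LaurentSeries

theorem solveDown_mem {R S : Type*} [CommRing R] [SetLike S R] [SubringClass S R] {s : S}
    {c a : ℕ → R} {n : ℕ} (hc : ∀ l, n ≤ l → c l ∈ s) (ha : ∀ m, n ≤ m → a m ∈ s) (N : ℕ) :
    solveDown c a N n ∈ s :=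
  sum_mem fun m hm => mul_mem (prod_mem fun l hl => hc l (mem_Ico.mp hl).1)
    (ha m (mem_Ico.mp hm).1)

section TwistedCocycle

open HahnSeries LaurentSeries

variable {k : Type*} [Field k] {p : ℕ} {α : ℕ → ℕ} {a : ℕ → LaurentSeries k}

theorem tt_pow (e : ℕ) : tt k ^ e = single (e : ℤ) 1 := by
  simp [tt, single_pow]

theorem coeff_tt_pow_mul (e : ℕ) (x : LaurentSeries k) (j : ℤ) :
    (tt k ^ e * x).coeff j = x.coeff (j - e) := by
  rw [tt_pow, coeff_single_mul, one_mul]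

theorem coeff_add_digitSum_of_eq_sub_tt_pow_mul
    (ha : ∀ n, ∀ i ∈ (a n).support,
      ((p : ℤ) ^ n) ∣ i ∧ ¬ ((p : ℤ) ^ (n + 1) ∣ i - (α n * p ^ n : ℕ)))
    {y : ℕ → LaurentSeries k} (hy : ∀ n, ∀ i ∈ (y n).support, ((p : ℤ) ^ n) ∣ i)
    (hrel : ∀ n, a n = y n - tt k ^ (α n * p ^ n) * y (n + 1))
    {n : ℕ} {i : ℤ} (hi : i ∈ (a n).support) :
    (y 0).coeff (i + digitSum p α 0 n) = (a n).coeff i :=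
  apply_add_digitSum_eq p α ha hy
    (fun n v => by rw [hrel n, coeff_sub, coeff_tt_pow_mul]) hi n.zero_le

theorem coeff_neg_add_digitSum_of_tt_pow_mul_eq_sub {a' : ℕ → LaurentSeries k}
    (ha : ∀ n, ∀ i ∈ (a n).support,
      ((p : ℤ) ^ n) ∣ i ∧ ¬ ((p : ℤ) ^ (n + 1) ∣ i - (α n * p ^ n : ℕ)))
    (hrev : ∀ n i, (a' n).coeff i = (a n).coeff (-i))
    {z : ℕ → LaurentSeries k} (hz : ∀ n, ∀ i ∈ (z n).support, ((p : ℤ) ^ n) ∣ i)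
    (hrel : ∀ n, tt k ^ (α n * p ^ n) * a' n = tt k ^ (α n * p ^ n) * z n - z (n + 1))
    {n : ℕ} {i : ℤ} (hi : i ∈ (a n).support) :
    (z 0).coeff (-(i + digitSum p α 0 n)) = (a n).coeff i := by
  -- read backwards, the `z n` satisfy the same coefficient recursion as the `y n`
  refine apply_add_digitSum_eq p α (Y := fun n v => (z n).coeff (-v)) ha
    (fun n v hv => dvd_neg.mp (hz n _ hv)) (fun n v => ?_) hi n.zero_le
  have := congrArg (coeff · (-v + (α n * p ^ n : ℕ))) (hrel n)
  simp only [coeff_sub, coeff_tt_pow_mul, add_sub_cancel_right, hrev, neg_neg] at this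
  rw [this, neg_sub, neg_add_eq_sub]

theorem exists_forall_ge_eq_zero_of_coeff_mem
    (ha : ∀ n, ∀ i ∈ (a n).support,
      ((p : ℤ) ^ n) ∣ i ∧ ¬ ((p : ℤ) ^ (n + 1) ∣ i - (α n * p ^ n : ℕ)))
    {F : Set ℤ} (hF : F.Finite) (hmem : ∀ n, ∀ i ∈ (a n).support, i + digitSum p α 0 n ∈ F) :
    ∃ N, ∀ n, N ≤ n → a n = 0 := by
  obtain ⟨N, hN⟩ := exists_forall_ge_eq_zero_of_finite p α ha hF hmem
  exact ⟨N, fun n hn => coeff_injective (funext (hN n hn))⟩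

theorem exists_finite_solution (hfin : ∀ n, (a n).support.Finite)
    (hdvd : ∀ n, ∀ i ∈ (a n).support, ((p : ℤ) ^ n) ∣ i) {N : ℕ} (hN : ∀ n, N ≤ n → a n = 0) :
    ∃ y : ℕ → LaurentSeries k,
      (∀ n, (y n).support.Finite ∧ ∀ i ∈ (y n).support, ((p : ℤ) ^ n) ∣ i) ∧
      ∀ n, a n = y n - tt k ^ (α n * p ^ n) * y (n + 1) := by
  refine ⟨solveDown (fun n => tt k ^ (α n * p ^ n)) a N, fun n => ⟨?_, ?_⟩,
    eq_solveDown_sub_mul _ a hN⟩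
  · refine solveDown_mem (s := finiteSupportSubring k) (fun l _ => ?_) (fun m _ => hfin m) N
    rw [tt_pow]
    exact single_mem_finiteSupportSubring _ _
  · refine solveDown_mem (s := supportDvdSubring k ((p : ℤ) ^ n)) (fun l hl => ?_)
      (fun m hm => supportDvdSubring_mono (pow_dvd_pow _ hm) (hdvd m)) N
    rw [tt_pow]
    exact single_one_mem_supportDvdSubring (by push_cast; exact dvd_mul_of_dvd_right (pow_dvd_pow _ hl) _)

theorem exists_reflected_solution {a' : ℕ → LaurentSeries k}
    (hrev : ∀ n i, (a' n).coeff i = (a n).coeff (-i))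
    (hdvd : ∀ n, ∀ i ∈ (a n).support, ((p : ℤ) ^ n) ∣ i) {N : ℕ} (hN : ∀ n, N ≤ n → a n = 0) :
    ∃ z : ℕ → LaurentSeries k,
      (∀ n, ∀ i ∈ (z n).support, ((p : ℤ) ^ n) ∣ i) ∧
      ∀ n, tt k ^ (α n * p ^ n) * a' n = tt k ^ (α n * p ^ n) * z n - z (n + 1) := by
  set c : ℕ → LaurentSeries k := fun n => single (-(α n * p ^ n : ℕ) : ℤ) 1
  have hN' : ∀ n, N ≤ n → a' n = 0 := fun n hn => by ext i; simp [hrev, hN n hn]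
  refine ⟨solveDown c a' N, fun n => ?_, fun n => ?_⟩
  · refine solveDown_mem (s := supportDvdSubring k ((p : ℤ) ^ n)) (fun l hl => ?_)
      (fun m hm i hi => ?_) N
    · exact single_one_mem_supportDvdSubring
        (by push_cast; exact (dvd_mul_of_dvd_right (pow_dvd_pow _ hl) _).neg_right)
    · rw [mem_support, hrev] at hi
      exact (pow_dvd_pow _ hm).trans (dvd_neg.mp (hdvd m _ hi))
  · have hc : tt k ^ (α n * p ^ n) * c n = 1 := by
      rw [tt_pow, single_mul_single, add_neg_cancel, one_mul, single_zero_one]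
    rw [eq_solveDown_sub_mul c a' hN' n, mul_sub, ← mul_assoc, hc, one_mul]

end TwistedCocycle

open HahnSeries LaurentSeries in
theorem twisted_rlim_trivial_iff_laurent_polynomials_general
    (k : Type*) [Field k] (p : ℕ)
    (α : ℕ → ℕ)
    (a a' : ℕ → LaurentSeries k)
    (hfin : ∀ n, (a n).support.Finite)
    (hrev : ∀ n i, (a' n).coeff i = (a n).coeff (-i))
    (ha : ∀ n, ∀ i ∈ (a n).support,
      ((p : ℤ) ^ n) ∣ i ∧ ¬ ((p : ℤ) ^ (n + 1) ∣ i - (α n * p ^ n : ℕ))) :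
    -- (i) ↔ (iii)
    ((∃ y : ℕ → LaurentSeries k,
        (∀ n, (y n).support.Finite ∧ ∀ i ∈ (y n).support, ((p : ℤ) ^ n) ∣ i) ∧
        ∀ n, a n = y n - (tt k) ^ (α n * p ^ n) * y (n + 1))
      ↔ (∃ N, ∀ n, N ≤ n → a n = 0)) ∧
    -- (ii) ↔ (iii)
    (((∃ y : ℕ → LaurentSeries k,
        (∀ n, ∀ i ∈ (y n).support, ((p : ℤ) ^ n) ∣ i) ∧
        ∀ n, a n = y n - (tt k) ^ (α n * p ^ n) * y (n + 1)) ∧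
      (∃ z : ℕ → LaurentSeries k,
        (∀ n, ∀ i ∈ (z n).support, ((p : ℤ) ^ n) ∣ i) ∧
        ∀ n, (tt k) ^ (α n * p ^ n) * a' n =
          (tt k) ^ (α n * p ^ n) * z n - z (n + 1)))
      ↔ (∃ N, ∀ n, N ≤ n → a n = 0)) := by
  have hdvd n i hi := (ha n i hi).1
  refine ⟨⟨fun ⟨y, hy, hrel⟩ => ?_, fun ⟨N, hN⟩ => exists_finite_solution hfin hdvd hN⟩,
    ⟨fun ⟨⟨y, hy, hrel⟩, ⟨z, hz, hrel'⟩⟩ => ?_, fun ⟨N, hN⟩ =>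
      ⟨(exists_finite_solution hfin hdvd hN).imp fun _ h => ⟨fun n => (h.1 n).2, h.2⟩,
        exists_reflected_solution hrev hdvd hN⟩⟩⟩
  · refine exists_forall_ge_eq_zero_of_coeff_mem ha (hy 0).1 fun n i hi => ?_
    have := coeff_add_digitSum_of_eq_sub_tt_pow_mul ha (fun n => (hy n).2) hrel hi
    exact (mem_support _ _).mpr (this ▸ hi)
  · refine exists_forall_ge_eq_zero_of_coeff_mem ha (Set.finite_Icc (y 0).order (-(z 0).order))
      fun n i hi => ⟨?_, ?_⟩
    · have := coeff_add_digitSum_of_eq_sub_tt_pow_mul ha hy hrel hi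
      exact order_le_of_coeff_ne_zero (this ▸ hi)
    · have := coeff_neg_add_digitSum_of_tt_pow_mul_eq_sub ha hrev hz hrel' hi
      exact le_neg.mp (order_le_of_coeff_ne_zero (this ▸ hi))

/-- **Triviality criterion over `k[t,t⁻¹]` (Lemma 5.9 d)).**
Let `α` be an admissible digit sequence, `(a n)` a sequence of Laurent polynomials
(elements of `k((t))` with finite support) with `supp(aₙ) ⊆ pⁿℤ \ (αₙ pⁿ + p^{n+1}ℤ)`,
and let `a' n = ι(a n)` be the image of `a n` in `k((s))` under `t ↦ s⁻¹`
(coefficientwise, `(a' n).coeff i = (a n).coeff (−i)`).  Then the following are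
equivalent: (i) the class of `(a n)` is trivial over `k[t,t⁻¹]`; (ii) it is trivial
over both `k((t))` and `k((t⁻¹))`; (iii) `aₙ = 0` for all large `n`. -/
theorem twisted_rlim_trivial_iff_laurent_polynomials
    (k : Type*) [Field k] [IsAlgClosed k] (p : ℕ) [CharP k p] (hp : 0 < p)
    (α : ℕ → ℕ) (hα : ∀ n, α n < p) (hadm : AdmissibleDigits p α)
    (a a' : ℕ → LaurentSeries k)
    (hfin : ∀ n, (a n).support.Finite)
    (hrev : ∀ n i, (a' n).coeff i = (a n).coeff (-i))
    (ha : ∀ n, ∀ i ∈ (a n).support,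
      ((p : ℤ) ^ n) ∣ i ∧ ¬ ((p : ℤ) ^ (n + 1) ∣ i - (α n * p ^ n : ℕ))) :
    -- (i) ↔ (iii)
    ((∃ y : ℕ → LaurentSeries k,
        (∀ n, (y n).support.Finite ∧ ∀ i ∈ (y n).support, ((p : ℤ) ^ n) ∣ i) ∧
        ∀ n, a n = y n - (tt k) ^ (α n * p ^ n) * y (n + 1))
      ↔ (∃ N, ∀ n, N ≤ n → a n = 0)) ∧
    -- (ii) ↔ (iii)
    (((∃ y : ℕ → LaurentSeries k,
        (∀ n, ∀ i ∈ (y n).support, ((p : ℤ) ^ n) ∣ i) ∧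
        ∀ n, a n = y n - (tt k) ^ (α n * p ^ n) * y (n + 1)) ∧
      (∃ z : ℕ → LaurentSeries k,
        (∀ n, ∀ i ∈ (z n).support, ((p : ℤ) ^ n) ∣ i) ∧
        ∀ n, (tt k) ^ (α n * p ^ n) * a' n =
          (tt k) ^ (α n * p ^ n) * z n - z (n + 1)))
      ↔ (∃ N, ∀ n, N ≤ n → a n = 0)) :=
  twisted_rlim_trivial_iff_laurent_polynomials_general k p α a a' hfin hrev ha
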